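/- For every b_1 > 0 and every γ ∈ (0,1), there exists B > 0 such that for all b_2 > B, the hypergeometric function 1F2(b_1 + γ; b_1, b_2; ·) does not belong to the Laguerre–Pólya class LP⁺. In particular, the Kalmykov–Karp conjecture (that a_1 ≥ b_1 > 0, b_2 > 0 implies 1F2(a_1; b_1, b_2; ·) ∈ LP⁺) is false. -/

import Mathlib

open Filter

/-- Rising factorial of a real number. -/
noncomputable def risingR (a : ℝ) (n : ℕ) : ℝ := (ascPochhammer ℝ n).eval a

/-- `1F2(a₁; b₁, b₂; ·)` as an entire function. -/
noncomputable def oneFtwo (a₁ b₁ b₂ : ℝ) (x : ℂ) : ℂ :=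
  ∑' n : ℕ, ((risingR a₁ n / (risingR b₁ n * risingR b₂ n * n.factorial) : ℝ) : ℂ) * x ^ n

/-- The Laguerre–Pólya class `LP⁺`: locally uniform limits of polynomials all of
whose zeros lie in `(-∞, 0]`. -/
def LPplus (f : ℂ → ℂ) : Prop :=
  ∃ P : ℕ → Polynomial ℂ,
    (∀ n, ∀ z : ℂ, (P n).eval z = 0 → ∃ r : ℝ, r ≤ 0 ∧ z = (r : ℂ)) ∧
    TendstoLocallyUniformly (fun n z => (P n).eval z) f atTop

open Polynomial Topology
lemma risingR_zero (a : ℝ) : risingR a 0 = 1 := by simp [risingR]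

lemma risingR_succ (a : ℝ) (n : ℕ) : risingR a (n + 1) = risingR a n * (a + n) := by
  simp [risingR, ascPochhammer_succ_eval]

lemma risingR_pos {a : ℝ} (ha : 0 < a) (n : ℕ) : 0 < risingR a n := by
  induction n with
  | zero => simp [risingR_zero]
  | succ n ih => rw [risingR_succ]; positivity

/-- The basic inequality predicate on normalized coefficients. -/
def goodE (e₁ e₂ e₃ e₄ : ℝ) : Prop :=
  0 ≤ e₁ ^ 2 - 2 * e₂ ∧
  0 ≤ e₁ ^ 3 - 3 * e₁ * e₂ + 3 * e₃ ∧
  0 ≤ e₁ * (e₁ ^ 3 - 3 * e₁ * e₂ + 3 * e₃) - e₂ * (e₁ ^ 2 - 2 * e₂) + e₃ * e₁ - 4 * e₄ ∧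
  (e₁ ^ 3 - 3 * e₁ * e₂ + 3 * e₃) ^ 2 ≤
    (e₁ ^ 2 - 2 * e₂) *
      (e₁ * (e₁ ^ 3 - 3 * e₁ * e₂ + 3 * e₃) - e₂ * (e₁ ^ 2 - 2 * e₂) + e₃ * e₁ - 4 * e₄)

lemma cs_step {a p2 p3 p4 : ℝ} (ha : 0 < a) (h2 : 0 ≤ p2) (h3 : 0 ≤ p3) (h4 : 0 ≤ p4)
    (hcs : p3 ^ 2 ≤ p2 * p4) :
    (p3 + a ^ 3) ^ 2 ≤ (p2 + a ^ 2) * (p4 + a ^ 4) := by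
  have key : 2 * a * p3 ≤ a ^ 2 * p2 + p4 := by
    have hsq : (2 * a * p3) ^ 2 ≤ (a ^ 2 * p2 + p4) ^ 2 := by
      nlinarith [sq_nonneg (a ^ 2 * p2 - p4),
        mul_le_mul_of_nonneg_left hcs (by positivity : (0:ℝ) ≤ 4 * a ^ 2)]
    exact (abs_le_of_sq_le_sq' hsq (by positivity)).2
  nlinarith [mul_le_mul_of_nonneg_left key (le_of_lt (mul_pos ha ha))]

/-- Key structural lemma: products of `1 + αX` with `α > 0` have coefficients that are
elementary symmetric functions, whose associated power sums satisfy Cauchy–Schwarz. -/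
lemma multiset_coeff_good (s : Multiset ℝ) (hs : ∀ a ∈ s, 0 < a) :
    ∃ e₁ e₂ e₃ e₄ : ℝ,
      (s.map fun a : ℝ => Polynomial.C (a : ℂ) * Polynomial.X + 1).prod.coeff 0 = 1 ∧
      (s.map fun a : ℝ => Polynomial.C (a : ℂ) * Polynomial.X + 1).prod.coeff 1 = (e₁ : ℂ) ∧
      (s.map fun a : ℝ => Polynomial.C (a : ℂ) * Polynomial.X + 1).prod.coeff 2 = (e₂ : ℂ) ∧
      (s.map fun a : ℝ => Polynomial.C (a : ℂ) * Polynomial.X + 1).prod.coeff 3 = (e₃ : ℂ) ∧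
      (s.map fun a : ℝ => Polynomial.C (a : ℂ) * Polynomial.X + 1).prod.coeff 4 = (e₄ : ℂ) ∧
      goodE e₁ e₂ e₃ e₄ := by
  induction s using Multiset.induction with
  | empty =>
      refine ⟨0, 0, 0, 0, by simp, by simp [coeff_one], by simp [coeff_one],
        by simp [coeff_one], by simp [coeff_one], by norm_num [goodE]⟩
  | cons a t ih =>
      obtain ⟨e₁, e₂, e₃, e₄, h0, h1, h2, h3, h4, hg⟩ := ih fun x hx => hs x (Multiset.mem_cons_of_mem hx)
      have ha : 0 < a := hs a (Multiset.mem_cons_self a t)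
      set Q := (t.map fun a : ℝ => Polynomial.C (a : ℂ) * Polynomial.X + 1).prod with hQ
      have hprod : ((a ::ₘ t).map fun a : ℝ => Polynomial.C (a : ℂ) * Polynomial.X + 1).prod
          = Polynomial.C (a : ℂ) * (Polynomial.X * Q) + Q := by
        rw [Multiset.map_cons, Multiset.prod_cons, ← hQ]; ring
      have hc0 : (Polynomial.C (a : ℂ) * (Polynomial.X * Q) + Q).coeff 0 = Q.coeff 0 := by
        simp [coeff_add, coeff_C_mul]
      have hcs : ∀ k : ℕ, (Polynomial.C (a : ℂ) * (Polynomial.X * Q) + Q).coeff (k + 1)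
          = (a : ℂ) * Q.coeff k + Q.coeff (k + 1) := by
        intro k; simp [coeff_add, coeff_C_mul, coeff_X_mul]
      refine ⟨e₁ + a, e₂ + a * e₁, e₃ + a * e₂, e₄ + a * e₃, ?_, ?_, ?_, ?_, ?_, ?_⟩
      · rw [hprod, hc0, h0]
      · rw [hprod, hcs 0, h0, h1]; push_cast; ring
      · rw [hprod, hcs 1, h1, h2]; push_cast; ring
      · rw [hprod, hcs 2, h2, h3]; push_cast; ring
      · rw [hprod, hcs 3, h3, h4]; push_cast; ring
      · obtain ⟨g2, g3, g4, gcs⟩ := hg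
        have i2 : (e₁ + a) ^ 2 - 2 * (e₂ + a * e₁) = (e₁ ^ 2 - 2 * e₂) + a ^ 2 := by ring
        have i3 : (e₁ + a) ^ 3 - 3 * (e₁ + a) * (e₂ + a * e₁) + 3 * (e₃ + a * e₂)
            = (e₁ ^ 3 - 3 * e₁ * e₂ + 3 * e₃) + a ^ 3 := by ring
        have i4 : (e₁ + a) * ((e₁ + a) ^ 3 - 3 * (e₁ + a) * (e₂ + a * e₁) + 3 * (e₃ + a * e₂))
              - (e₂ + a * e₁) * ((e₁ + a) ^ 2 - 2 * (e₂ + a * e₁))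
              + (e₃ + a * e₂) * (e₁ + a) - 4 * (e₄ + a * e₃)
            = (e₁ * (e₁ ^ 3 - 3 * e₁ * e₂ + 3 * e₃) - e₂ * (e₁ ^ 2 - 2 * e₂) + e₃ * e₁ - 4 * e₄)
              + a ^ 4 := by ring
        refine ⟨?_, ?_, ?_, ?_⟩
        · rw [i2]; positivity
        · rw [i3]; positivity
        · rw [i4]; positivity
        · rw [i4, i3, i2]; exact cs_step ha g2 g3 g4 gcs

lemma coeff_good_of_roots (P : Polynomial ℂ) (h0 : P.eval 0 ≠ 0)
    (hroots : ∀ z : ℂ, P.eval z = 0 → ∃ r : ℝ, r ≤ 0 ∧ z = (r : ℂ)) :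
    ∃ e₁ e₂ e₃ e₄ : ℝ, goodE e₁ e₂ e₃ e₄ ∧
      P.coeff 1 = (e₁ : ℂ) * P.coeff 0 ∧ P.coeff 2 = (e₂ : ℂ) * P.coeff 0 ∧
      P.coeff 3 = (e₃ : ℂ) * P.coeff 0 ∧ P.coeff 4 = (e₄ : ℂ) * P.coeff 0 := by
  have hP : P ≠ 0 := fun h => h0 (by simp [h])
  have hroot_neg : ∀ z ∈ P.roots, z = ((z.re : ℝ) : ℂ) ∧ z.re < 0 := by
    intro z hz
    have hzr : P.eval z = 0 := (Polynomial.mem_roots hP).1 hz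
    obtain ⟨r, hr, rfl⟩ := hroots z hzr
    have : r ≠ 0 := by rintro rfl; simp only [Complex.ofReal_zero] at hzr; exact h0 hzr
    constructor
    · simp
    · simpa using lt_of_le_of_ne hr this
  have hsplits := Polynomial.Splits.eq_prod_roots (IsAlgClosed.splits P)
  have hmapeq : (P.roots.map fun z => Polynomial.X - Polynomial.C z)
      = P.roots.map fun z =>
          Polynomial.C (-z) * (Polynomial.C (((-(z.re)⁻¹ : ℝ)) : ℂ) * Polynomial.X + 1) := by
    refine Multiset.map_congr rfl fun z hz => ?_
    obtain ⟨hze, hzn⟩ := hroot_neg z hz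
    have hz0 : z ≠ 0 := fun h => by simp [h] at hzn
    have hw : (-z) * (((-(z.re)⁻¹ : ℝ)) : ℂ) = 1 := by
      push_cast
      rw [← hze, neg_mul_neg, mul_inv_cancel₀ hz0]
    rw [mul_add, mul_one, ← mul_assoc, ← Polynomial.C_mul, hw, Polynomial.C_1, one_mul,
      Polynomial.C_neg]
    ring
  set s : Multiset ℝ := P.roots.map fun z => -(z.re)⁻¹ with hs
  have hspos : ∀ a ∈ s, 0 < a := by
    intro a ha
    rw [hs] at ha
    obtain ⟨z, hz, rfl⟩ := Multiset.mem_map.1 ha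
    have := (hroot_neg z hz).2
    exact neg_pos.2 (inv_lt_zero.2 this)
  obtain ⟨e₁, e₂, e₃, e₄, q0, q1, q2, q3, q4, hgood⟩ := multiset_coeff_good s hspos
  set Q := (s.map fun a : ℝ => Polynomial.C (a : ℂ) * Polynomial.X + 1).prod with hQ
  have hQeq : (P.roots.map fun z =>
      Polynomial.C (((-(z.re)⁻¹ : ℝ)) : ℂ) * Polynomial.X + 1).prod = Q := by
    rw [hQ, hs, Multiset.map_map]
    rfl
  set c0 : ℂ := (P.roots.map fun z => -z).prod with hc0
  have hCprod : (P.roots.map fun z => Polynomial.C (-z)).prod = Polynomial.C c0 := by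
    have h1 : (P.roots.map fun z => Polynomial.C (-z))
        = (P.roots.map (fun z : ℂ => -z)).map (Polynomial.C : ℂ →+* Polynomial ℂ) := by
      simp [Multiset.map_map, Function.comp]
    rw [hc0, h1]
    exact (map_multiset_prod (Polynomial.C : ℂ →+* Polynomial ℂ) _).symm
  have hPfact : P = Polynomial.C (P.leadingCoeff * c0) * Q := by
    conv_lhs => rw [hsplits]
    rw [hmapeq, Multiset.prod_map_mul, hCprod, hQeq, Polynomial.C_mul, mul_assoc]
  have hPk : ∀ k, P.coeff k = P.leadingCoeff * c0 * Q.coeff k := by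
    intro k
    conv_lhs => rw [hPfact]
    rw [Polynomial.coeff_C_mul]
  have hP0 : P.coeff 0 = P.leadingCoeff * c0 := by rw [hPk 0, q0, mul_one]
  exact ⟨e₁, e₂, e₃, e₄, hgood,
    by rw [hPk 1, q1, hP0]; ring, by rw [hPk 2, q2, hP0]; ring,
    by rw [hPk 3, q3, hP0]; ring, by rw [hPk 4, q4, hP0]; ring⟩
/-- Taylor coefficients of `oneFtwo`. -/
noncomputable def hgA (b₁ γ b₂ : ℝ) (n : ℕ) : ℝ :=
  risingR (b₁ + γ) n / (risingR b₁ n * risingR b₂ n * n.factorial)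

lemma oneFtwo_eq (b₁ γ b₂ : ℝ) (x : ℂ) :
    oneFtwo (b₁ + γ) b₁ b₂ x = ∑' n : ℕ, ((hgA b₁ γ b₂ n : ℝ) : ℂ) * x ^ n := rfl

section bounds

variable {b₁ γ b₂ : ℝ}

lemma rising_ratio_le (hb₁ : 0 < b₁) (hγ : 0 ≤ γ) (n : ℕ) :
    risingR (b₁ + γ) n ≤ (1 + γ / b₁) ^ n * risingR b₁ n := by
  induction n with
  | zero => simp [risingR_zero]
  | succ n ih =>
      rw [risingR_succ, risingR_succ]
      have hfac : b₁ + γ + n ≤ (1 + γ / b₁) * (b₁ + n) := by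
        have h1 : (1 + γ / b₁) * (b₁ + n) = b₁ + n + γ + γ * n / b₁ := by field_simp; ring
        have h2 : 0 ≤ γ * n / b₁ := by positivity
        linarith
      have h3 : 0 < risingR (b₁ + γ) n := risingR_pos (by linarith) n
      have h4 : 0 < risingR b₁ n := risingR_pos hb₁ n
      calc risingR (b₁ + γ) n * (b₁ + γ + n)
          ≤ ((1 + γ / b₁) ^ n * risingR b₁ n) * ((1 + γ / b₁) * (b₁ + n)) := by
            apply mul_le_mul ih hfac (by positivity)
            positivity
        _ = (1 + γ / b₁) ^ (n + 1) * (risingR b₁ n * (b₁ + n)) := by ring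

lemma factorial_le_rising (hb₂ : 1 ≤ b₂) (n : ℕ) : (n.factorial : ℝ) ≤ risingR b₂ n := by
  induction n with
  | zero => simp [risingR_zero]
  | succ n ih =>
      rw [risingR_succ]
      have h1 : (0:ℝ) < n.factorial := by positivity
      have h2 : ((n+1 : ℕ) : ℝ) ≤ b₂ + n := by push_cast; linarith
      calc ((n+1).factorial : ℝ) = (n.factorial : ℝ) * ((n+1 : ℕ) : ℝ) := by
            rw [Nat.factorial_succ]; push_cast; ring
        _ ≤ risingR b₂ n * (b₂ + n) := by
            apply mul_le_mul ih h2 (by positivity) (le_of_lt (lt_of_lt_of_le h1 ih))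

lemma hgA_nonneg (hb₁ : 0 < b₁) (hγ : 0 < γ) (hb₂ : 1 ≤ b₂) (n : ℕ) : 0 ≤ hgA b₁ γ b₂ n := by
  unfold hgA
  have := risingR_pos (show (0:ℝ) < b₁ + γ by linarith) n
  have := risingR_pos hb₁ n
  have := risingR_pos (show (0:ℝ) < b₂ by linarith) n
  positivity

lemma hgA_le (hb₁ : 0 < b₁) (hγ : 0 < γ) (hb₂ : 1 ≤ b₂) (n : ℕ) : hgA b₁ γ b₂ n ≤ (1 + γ / b₁) ^ n / (n.factorial * n.factorial) := by
  unfold hgA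
  have h1 := risingR_pos hb₁ n
  have h2 : (0:ℝ) < n.factorial := by positivity
  have h3 := factorial_le_rising (b₂ := b₂) hb₂ n
  have key : risingR b₁ n * (n.factorial : ℝ) * n.factorial
      ≤ risingR b₁ n * risingR b₂ n * n.factorial := by
    have := mul_le_mul_of_nonneg_left h3 (le_of_lt h1)
    nlinarith
  calc risingR (b₁ + γ) n / (risingR b₁ n * risingR b₂ n * n.factorial)
      ≤ ((1 + γ / b₁) ^ n * risingR b₁ n) / (risingR b₁ n * n.factorial * n.factorial) := by
        apply div_le_div₀ (by positivity) (rising_ratio_le hb₁ hγ.le n) (by positivity) key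
    _ = (1 + γ / b₁) ^ n / (n.factorial * n.factorial) := by
        field_simp

lemma hgA_summable (hb₁ : 0 < b₁) (hγ : 0 < γ) (hb₂ : 1 ≤ b₂) {r : ℝ} (hr : 0 ≤ r) :
    Summable (fun n => |hgA b₁ γ b₂ n| * r ^ n) := by
  have hK : (0:ℝ) < 1 + γ / b₁ := by positivity
  refine Summable.of_nonneg_of_le (fun n => by positivity) (fun n => ?_)
    (Real.summable_pow_div_factorial ((1 + γ / b₁) * r))
  · rw [abs_of_nonneg (hgA_nonneg hb₁ hγ hb₂ n)]
    have h2 : (1:ℝ) ≤ n.factorial := by exact_mod_cast Nat.one_le_iff_ne_zero.2 n.factorial_ne_zero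
    have h3 : (0:ℝ) < n.factorial := by positivity
    calc hgA b₁ γ b₂ n * r ^ n
        ≤ ((1 + γ / b₁) ^ n / (n.factorial * n.factorial)) * r ^ n := by
          apply mul_le_mul_of_nonneg_right (hgA_le hb₁ hγ hb₂ n) (by positivity)
      _ = ((1 + γ / b₁) * r) ^ n / (n.factorial * n.factorial) := by rw [mul_pow]; ring
      _ ≤ ((1 + γ / b₁) * r) ^ n / n.factorial := by
          apply div_le_div_of_nonneg_left (by positivity) h3
          nlinarith

end bounds

/-- The formal power series of `oneFtwo`. -/
noncomputable def hgSeries (b₁ γ b₂ : ℝ) : FormalMultilinearSeries ℂ ℂ ℂ :=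
  FormalMultilinearSeries.ofScalars ℂ (fun n => ((hgA b₁ γ b₂ n : ℝ) : ℂ))

lemma hgSeries_hasFPowerSeries {b₁ γ b₂ : ℝ} (hb₁ : 0 < b₁) (hγ : 0 < γ) (hb₂ : 1 ≤ b₂) :
    HasFPowerSeriesOnBall (oneFtwo (b₁ + γ) b₁ b₂) (hgSeries b₁ γ b₂) 0 ⊤ := by
  have hnorm : ∀ n, ‖hgSeries b₁ γ b₂ n‖ = |hgA b₁ γ b₂ n| := by
    intro n
    rw [hgSeries, FormalMultilinearSeries.ofScalars_norm]
    rw [Complex.norm_real, Real.norm_eq_abs]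
  have hsummable : ∀ y : ℂ, Summable (fun n => ((hgA b₁ γ b₂ n : ℝ) : ℂ) * y ^ n) := by
    intro y
    apply Summable.of_norm
    have : ∀ n, ‖((hgA b₁ γ b₂ n : ℝ) : ℂ) * y ^ n‖ = |hgA b₁ γ b₂ n| * ‖y‖ ^ n := by
      intro n; rw [norm_mul, norm_pow, Complex.norm_real, Real.norm_eq_abs]
    simpa only [this] using hgA_summable hb₁ hγ hb₂ (norm_nonneg y)
  constructor
  · rw [FormalMultilinearSeries.radius_eq_top_of_summable_norm]
    intro r
    simpa only [hnorm] using hgA_summable hb₁ hγ hb₂ r.coe_nonneg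
  · exact ENNReal.zero_lt_top
  · intro y _
    rw [zero_add]
    have : (fun n => hgSeries b₁ γ b₂ n (fun _ => y)) = fun n => ((hgA b₁ γ b₂ n : ℝ) : ℂ) * y ^ n := by
      funext n
      rw [hgSeries, FormalMultilinearSeries.ofScalars_apply_eq, smul_eq_mul]
    rw [this, oneFtwo_eq]
    exact (hsummable y).hasSum

lemma oneFtwo_iteratedDeriv {b₁ γ b₂ : ℝ} (hb₁ : 0 < b₁) (hγ : 0 < γ) (hb₂ : 1 ≤ b₂) (n : ℕ) :
    iteratedDeriv n (oneFtwo (b₁ + γ) b₁ b₂) 0 = (n.factorial : ℂ) * ((hgA b₁ γ b₂ n : ℝ) : ℂ) := by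
  have h := (hgSeries_hasFPowerSeries hb₁ hγ hb₂).factorial_smul 1 n
  rw [iteratedDeriv_eq_iteratedFDeriv]
  rw [← h, hgSeries, FormalMultilinearSeries.ofScalars_apply_eq, one_pow, smul_eq_mul, mul_one,
    nsmul_eq_mul]
/-- Locally uniform convergence of entire functions upgrades to all derivatives. -/
lemma tlu_iterated (P : ℕ → Polynomial ℂ) (f : ℂ → ℂ)
    (h : TendstoLocallyUniformly (fun n z => (P n).eval z) f atTop) (k : ℕ) :
    TendstoLocallyUniformly
      (fun n z => ((Polynomial.derivative (R := ℂ))^[k] (P n)).eval z) (deriv^[k] f) atTop := by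
  induction k with
  | zero => simpa using h
  | succ k ih =>
      rw [← tendstoLocallyUniformlyOn_univ] at ih ⊢
      have hdiff : ∀ᶠ n in atTop,
          DifferentiableOn ℂ (fun z => ((Polynomial.derivative (R := ℂ))^[k] (P n)).eval z)
            Set.univ :=
        Filter.Eventually.of_forall fun n =>
          (Polynomial.differentiable _).differentiableOn
      have hstep := ih.deriv hdiff isOpen_univ
      have heq : (deriv ∘ fun n z => ((Polynomial.derivative (R := ℂ))^[k] (P n)).eval z)
          = fun n z => ((Polynomial.derivative (R := ℂ))^[k+1] (P n)).eval z := by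
        funext n
        funext z
        simp only [Function.comp, Function.iterate_succ_apply']
        rw [Polynomial.deriv]
      rw [heq] at hstep
      rw [Function.iterate_succ_apply']
      exact hstep

lemma coeff_tendsto (P : ℕ → Polynomial ℂ) (f : ℂ → ℂ)
    (h : TendstoLocallyUniformly (fun n z => (P n).eval z) f atTop) (k : ℕ) :
    Tendsto (fun n => (P n).coeff k) atTop (𝓝 (((k.factorial : ℂ))⁻¹ * iteratedDeriv k f 0)) := by
  have hfac : ((k.factorial : ℂ)) ≠ 0 := by
    exact_mod_cast Nat.cast_ne_zero.2 k.factorial_ne_zero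
  have htlu := tlu_iterated P f h k
  rw [← tendstoLocallyUniformlyOn_univ] at htlu
  have htend := htlu.tendsto_at (Set.mem_univ (0 : ℂ))
  have heval : ∀ Q : Polynomial ℂ,
      ((Polynomial.derivative (R := ℂ))^[k] Q).eval 0 = (k.factorial : ℂ) * Q.coeff k := by
    intro Q
    rw [← Polynomial.coeff_zero_eq_eval_zero, Polynomial.coeff_iterate_derivative, Nat.zero_add,
      Nat.descFactorial_self, nsmul_eq_mul]
  simp only [heval] at htend
  have hid : iteratedDeriv k f 0 = deriv^[k] f 0 := by rw [iteratedDeriv_eq_iterate]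
  rw [hid]
  have := htend.const_mul ((k.factorial : ℂ))⁻¹
  simpa only [← mul_assoc, inv_mul_cancel₀ hfac, one_mul] using this

/-- Limit coefficients as `b₂ → ∞`. -/
noncomputable def hgAinf (b₁ γ : ℝ) (k : ℕ) : ℝ :=
  risingR (b₁ + γ) k / (risingR b₁ k * k.factorial)

/-- The Hankel-type quantity whose sign obstructs membership in `LP⁺`. -/
def E4 (x₁ x₂ x₃ x₄ : ℝ) : ℝ :=
  (x₁^3 - 3*x₁*x₂ + 3*x₃)^2 -
    (x₁^2 - 2*x₂) * (x₁*(x₁^3 - 3*x₁*x₂ + 3*x₃) - x₂*(x₁^2 - 2*x₂) + x₃*x₁ - 4*x₄)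

lemma E4_continuous : Continuous fun q : ℝ × ℝ × ℝ × ℝ => E4 q.1 q.2.1 q.2.2.1 q.2.2.2 := by
  unfold E4
  fun_prop

lemma tendsto_div_add {c : ℝ} (hc : 0 ≤ c) :
    Tendsto (fun x : ℝ => x / (x + c)) atTop (𝓝 1) := by
  have h1 : Tendsto (fun x : ℝ => 1 - c / (x + c)) atTop (𝓝 1) := by
    have h2 : Tendsto (fun x : ℝ => c / (x + c)) atTop (𝓝 0) :=
      tendsto_const_nhds.div_atTop (tendsto_atTop_add_const_right _ c tendsto_id)
    simpa using tendsto_const_nhds.sub h2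
  apply Tendsto.congr' _ h1
  filter_upwards [eventually_gt_atTop (0:ℝ)] with x hx
  have hxc : x + c ≠ 0 := by positivity
  field_simp
  ring

lemma tendsto_pow_div_rising (k : ℕ) :
    Tendsto (fun x : ℝ => x ^ k / risingR x k) atTop (𝓝 1) := by
  induction k with
  | zero => simpa [risingR_zero] using tendsto_const_nhds
  | succ k ih =>
      have h1 : Tendsto (fun x : ℝ => (x ^ k / risingR x k) * (x / (x + k))) atTop (𝓝 (1*1)) :=
        ih.mul (tendsto_div_add (Nat.cast_nonneg k))
      rw [mul_one] at h1
      apply Tendsto.congr' _ h1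
      filter_upwards [eventually_gt_atTop (0:ℝ)] with x hx
      have hr : risingR x k ≠ 0 := (risingR_pos hx k).ne'
      have hxk : x + (k:ℝ) ≠ 0 := by positivity
      rw [risingR_succ]
      field_simp
      ring
lemma risingR_one' (x : ℝ) : risingR x 1 = x := by
  rw [risingR_succ, risingR_zero]; push_cast; ring

lemma risingR_two (x : ℝ) : risingR x 2 = x * (x + 1) := by
  rw [risingR_succ, risingR_one']; push_cast; ring

lemma risingR_three (x : ℝ) : risingR x 3 = x * (x + 1) * (x + 2) := by
  rw [risingR_succ, risingR_two]; push_cast; ring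

lemma risingR_four (x : ℝ) : risingR x 4 = x * (x + 1) * (x + 2) * (x + 3) := by
  rw [risingR_succ, risingR_three]; push_cast; ring

lemma E4_limit_pos {b₁ γ : ℝ} (hb₁ : 0 < b₁) (hγ₀ : 0 < γ) (hγ₁ : γ < 1) :
    0 < E4 (hgAinf b₁ γ 1) (hgAinf b₁ γ 2) (hgAinf b₁ γ 3) (hgAinf b₁ γ 4) := by
  have e1 : hgAinf b₁ γ 1 = (b₁ + γ) / b₁ := by
    unfold hgAinf; rw [risingR_one', risingR_one']; norm_num
  have e2 : hgAinf b₁ γ 2 = (b₁ + γ) * (b₁ + γ + 1) / (b₁ * (b₁ + 1) * 2) := by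
    unfold hgAinf; rw [risingR_two, risingR_two]; norm_num
  have e3 : hgAinf b₁ γ 3 = (b₁ + γ) * (b₁ + γ + 1) * (b₁ + γ + 2) /
      (b₁ * (b₁ + 1) * (b₁ + 2) * 6) := by
    unfold hgAinf; rw [risingR_three, risingR_three]; norm_num [Nat.factorial]
  have e4 : hgAinf b₁ γ 4 = (b₁ + γ) * (b₁ + γ + 1) * (b₁ + γ + 2) * (b₁ + γ + 3) /
      (b₁ * (b₁ + 1) * (b₁ + 2) * (b₁ + 3) * 24) := by
    unfold hgAinf; rw [risingR_four, risingR_four]; norm_num [Nat.factorial]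
  have hne0 : b₁ ≠ 0 := hb₁.ne'
  have hne1 : b₁ + 1 ≠ 0 := by positivity
  have hne2 : b₁ + 2 ≠ 0 := by positivity
  have hne3 : b₁ + 3 ≠ 0 := by positivity
  have hfact : E4 (hgAinf b₁ γ 1) (hgAinf b₁ γ 2) (hgAinf b₁ γ 3) (hgAinf b₁ γ 4)
      = γ^2 * (1 - γ) * (b₁ + γ)^2 * (b₁ + γ + 1) /
        (b₁^4 * (b₁ + 1)^3 * (b₁ + 2)^2 * (b₁ + 3)) := by
    rw [e1, e2, e3, e4]
    unfold E4
    field_simp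
    ring
  rw [hfact]
  have h1γ : 0 < 1 - γ := by linarith
  apply div_pos
  · have h0 : (0:ℝ) < γ^2 := by positivity
    have h2 : (0:ℝ) < (b₁ + γ)^2 := by positivity
    have h3 : (0:ℝ) < b₁ + γ + 1 := by positivity
    exact mul_pos (mul_pos (mul_pos h0 h1γ) h2) h3
  · positivity
/-- Counterexample to the Kalmykov–Karp conjecture: for every `b₁ > 0` and
`γ ∈ (0,1)`, the function `1F2(b₁ + γ; b₁, b₂; ·)` fails to belong to `LP⁺` for
all sufficiently large `b₂`. -/
theorem oneFtwo_not_LPplus_of_large_b2 (b₁ γ : ℝ) (hb₁ : 0 < b₁)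
    (hγ₀ : 0 < γ) (hγ₁ : γ < 1) :
    ∃ B : ℝ, 0 < B ∧ ∀ b₂ : ℝ, B < b₂ → ¬ LPplus (oneFtwo (b₁ + γ) b₁ b₂) := by
  -- the rescaled coefficients converge as b₂ → ∞
  have hAk_eq : ∀ (b₂ : ℝ) (k : ℕ), hgA b₁ γ b₂ k = hgAinf b₁ γ k / risingR b₂ k := by
    intro b₂ k
    unfold hgA hgAinf
    rw [div_div]
    congr 1
    ring
  have hW : ∀ k : ℕ, Tendsto (fun b₂ : ℝ => b₂ ^ k * hgA b₁ γ b₂ k) atTop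
      (𝓝 (hgAinf b₁ γ k)) := by
    intro k
    have h1 : (fun b₂ : ℝ => b₂ ^ k * hgA b₁ γ b₂ k)
        = fun b₂ : ℝ => hgAinf b₁ γ k * (b₂ ^ k / risingR b₂ k) := by
      funext b₂; rw [hAk_eq]; ring
    rw [h1]
    simpa using (tendsto_pow_div_rising k).const_mul (hgAinf b₁ γ k)
  -- the obstruction quantity
  set D : ℝ → ℝ := fun b₂ =>
    E4 (hgA b₁ γ b₂ 1) (hgA b₁ γ b₂ 2) (hgA b₁ γ b₂ 3) (hgA b₁ γ b₂ 4) with hD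
  have hhom : ∀ b₂ : ℝ, b₂ ^ 6 * D b₂
      = E4 (b₂ ^ 1 * hgA b₁ γ b₂ 1) (b₂ ^ 2 * hgA b₁ γ b₂ 2)
          (b₂ ^ 3 * hgA b₁ γ b₂ 3) (b₂ ^ 4 * hgA b₁ γ b₂ 4) := by
    intro b₂; rw [hD]; unfold E4; ring
  have htendD : Tendsto (fun b₂ : ℝ => b₂ ^ 6 * D b₂) atTop
      (𝓝 (E4 (hgAinf b₁ γ 1) (hgAinf b₁ γ 2) (hgAinf b₁ γ 3) (hgAinf b₁ γ 4))) := by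
    have hq : Tendsto (fun b₂ : ℝ => (b₂ ^ 1 * hgA b₁ γ b₂ 1, (b₂ ^ 2 * hgA b₁ γ b₂ 2,
        (b₂ ^ 3 * hgA b₁ γ b₂ 3, b₂ ^ 4 * hgA b₁ γ b₂ 4)))) atTop
        (𝓝 (hgAinf b₁ γ 1, (hgAinf b₁ γ 2, (hgAinf b₁ γ 3, hgAinf b₁ γ 4)))) :=
      (hW 1).prodMk_nhds ((hW 2).prodMk_nhds ((hW 3).prodMk_nhds (hW 4)))
    have := (E4_continuous.tendsto _).comp hq
    simp only [Function.comp] at this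
    simp only [funext hhom]
    exact this
  have hevD : ∀ᶠ b₂ : ℝ in atTop, 0 < D b₂ := by
    have h1 := htendD.eventually (eventually_gt_nhds (E4_limit_pos hb₁ hγ₀ hγ₁))
    filter_upwards [h1, eventually_gt_atTop (0:ℝ)] with b₂ h2 h3
    by_contra h4
    push_neg at h4
    have h5 : (0:ℝ) < b₂ ^ 6 := by positivity
    nlinarith
  obtain ⟨B₀, hB₀⟩ := eventually_atTop.1 ((eventually_ge_atTop (1:ℝ)).and hevD)
  refine ⟨max B₀ 1, lt_of_lt_of_le one_pos (le_max_right _ _), fun b₂ hb₂ hLP => ?_⟩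
  obtain ⟨hb₂1, hDpos⟩ := hB₀ b₂ ((le_max_left _ _).trans hb₂.le)
  obtain ⟨P, hroots, htlu⟩ := hLP
  -- coefficients of the polynomials converge to the Taylor coefficients
  have hcoeff : ∀ k : ℕ, Tendsto (fun n => (P n).coeff k) atTop
      (𝓝 ((hgA b₁ γ b₂ k : ℝ) : ℂ)) := by
    intro k
    have h1 := coeff_tendsto P _ htlu k
    rw [oneFtwo_iteratedDeriv hb₁ hγ₀ hb₂1 k] at h1
    have hfac : ((k.factorial : ℂ)) ≠ 0 := by
      exact_mod_cast Nat.cast_ne_zero.2 k.factorial_ne_zero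
    rwa [← mul_assoc, inv_mul_cancel₀ hfac, one_mul] at h1
  have ha0 : hgA b₁ γ b₂ 0 = 1 := by
    unfold hgA; simp [risingR_zero]
  have hc0 : Tendsto (fun n => (P n).coeff 0) atTop (𝓝 (1 : ℂ)) := by
    have := hcoeff 0; rwa [ha0, Complex.ofReal_one] at this
  have h0ne : ∀ᶠ n in atTop, (P n).coeff 0 ≠ 0 :=
    hc0.eventually_ne one_ne_zero
  -- normalized coefficients
  set v : ℕ → ℕ → ℝ := fun k n => (((P n).coeff k) / ((P n).coeff 0)).re with hv
  have hvt : ∀ k : ℕ, Tendsto (fun n => v k n) atTop (𝓝 (hgA b₁ γ b₂ k)) := by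
    intro k
    have hdiv : Tendsto (fun n => (P n).coeff k / (P n).coeff 0) atTop
        (𝓝 (((hgA b₁ γ b₂ k : ℝ) : ℂ) / 1)) := (hcoeff k).div hc0 one_ne_zero
    rw [div_one] at hdiv
    have := (Complex.continuous_re.tendsto _).comp hdiv
    exact this
  -- the eventual inequality from the root structure
  have hineq : ∀ᶠ n in atTop, E4 (v 1 n) (v 2 n) (v 3 n) (v 4 n) ≤ 0 := by
    filter_upwards [h0ne] with n hn
    obtain ⟨e₁, e₂, e₃, e₄, hg, hc1, hc2, hc3, hc4⟩ :=
      coeff_good_of_roots (P n) (by rwa [← Polynomial.coeff_zero_eq_eval_zero]) (hroots n)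
    have hv1 : v 1 n = e₁ := by
      rw [hv]; simp only; rw [hc1, mul_div_assoc, div_self hn, mul_one, Complex.ofReal_re]
    have hv2 : v 2 n = e₂ := by
      rw [hv]; simp only; rw [hc2, mul_div_assoc, div_self hn, mul_one, Complex.ofReal_re]
    have hv3 : v 3 n = e₃ := by
      rw [hv]; simp only; rw [hc3, mul_div_assoc, div_self hn, mul_one, Complex.ofReal_re]
    have hv4 : v 4 n = e₄ := by
      rw [hv]; simp only; rw [hc4, mul_div_assoc, div_self hn, mul_one, Complex.ofReal_re]
    rw [hv1, hv2, hv3, hv4]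
    obtain ⟨-, -, -, hcs⟩ := hg
    unfold E4
    linarith
  -- pass to the limit
  have hlim : Tendsto (fun n => E4 (v 1 n) (v 2 n) (v 3 n) (v 4 n)) atTop (𝓝 (D b₂)) := by
    have hq : Tendsto (fun n => (v 1 n, (v 2 n, (v 3 n, v 4 n)))) atTop
        (𝓝 (hgA b₁ γ b₂ 1, (hgA b₁ γ b₂ 2, (hgA b₁ γ b₂ 3, hgA b₁ γ b₂ 4)))) :=
      (hvt 1).prodMk_nhds ((hvt 2).prodMk_nhds ((hvt 3).prodMk_nhds (hvt 4)))
    have := (E4_continuous.tendsto _).comp hq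
    simpa [Function.comp_def, hD] using this
  have hfinal : D b₂ ≤ 0 := le_of_tendsto hlim hineq
  linarith
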